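/- (Swartz) Let Δ be a (d−1)-dimensional pure simplicial complex on [n]. Then for every i = 1, 2, …, d, i·h_i(Δ) + (d−i+1)·h_{i−1}(Δ) = Σ_{v∈[n]} h_{i−1}(lk_Δ({v})). -/

import Mathlib

/-! Combinatorial core: simplicial complexes, reduced simplicial homology over a
field, links, dimension, f- and h-vectors, and Serre's condition (S_r). -/

namespace SerrePaper

open scoped Classical

/-- `Δ` is a simplicial complex on the vertex set `Fin n`: every singleton is a face
and it is closed under taking subsets. -/
def IsSimplicialComplex {n : ℕ} (Δ : Set (Finset (Fin n))) : Prop :=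
  (∀ i : Fin n, {i} ∈ Δ) ∧ ∀ F ∈ Δ, ∀ G, G ⊆ F → G ∈ Δ

/-- The faces of `Δ` of cardinality `c` (so of dimension `c - 1`), for `c : ℤ`. -/
def cFaces {n : ℕ} (Δ : Set (Finset (Fin n))) (c : ℤ) : Type :=
  {F : Finset (Fin n) // F ∈ Δ ∧ (F.card : ℤ) = c}

/-- The space of (augmented) simplicial `c-1`-chains of `Δ` with coefficients in `K`. -/
abbrev Chains (K : Type) [Field K] {n : ℕ} (Δ : Set (Finset (Fin n))) (c : ℤ) : Type :=
  cFaces Δ c → K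

/-- The simplicial boundary map from chains on cardinality-`(c+1)` faces to chains on
cardinality-`c` faces. -/
noncomputable def bd (K : Type) [Field K] {n : ℕ} (Δ : Set (Finset (Fin n))) (c : ℤ) :
    Chains K Δ (c + 1) →ₗ[K] Chains K Δ c where
  toFun f G := ∑ v : Fin n,
    if h : v ∉ G.1 ∧ insert v G.1 ∈ Δ then
      (-1 : K) ^ (G.1.filter (fun u => u < v)).card *
        f ⟨insert v G.1, h.2, by
          rw [Finset.card_insert_of_notMem h.1]
          have := G.2.2
          push_cast
          omega⟩
    else 0
  map_add' f g := by
    funext G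
    simp only [Pi.add_apply]
    rw [← Finset.sum_add_distrib]
    refine Finset.sum_congr rfl fun v _ => ?_
    by_cases h : v ∉ G.1 ∧ insert v G.1 ∈ Δ
    · simp only [dif_pos h, Pi.add_apply]; exact mul_add _ _ _
    · simp only [dif_neg h, add_zero]
  map_smul' c f := by
    funext G
    simp only [Pi.smul_apply, smul_eq_mul, RingHom.id_apply]
    rw [Finset.mul_sum]
    refine Finset.sum_congr rfl fun v _ => ?_
    by_cases h : v ∉ G.1 ∧ insert v G.1 ∈ Δ
    · simp only [dif_pos h, Pi.smul_apply, smul_eq_mul]; exact mul_left_comm _ _ _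
    · simp only [dif_neg h, mul_zero]

/-- Vanishing of the `i`-th reduced simplicial homology of `Δ` with coefficients
in `K`:  every `i`-cycle is an `(i+1)`-boundary (in the augmented chain complex,
so that `i = -1` is also meaningful). -/
def ReducedHomologyVanishes (K : Type) [Field K] {n : ℕ} (Δ : Set (Finset (Fin n)))
    (i : ℤ) : Prop :=
  LinearMap.ker (bd K Δ i) ≤ LinearMap.range (bd K Δ (i + 1))

/-- The link of `Δ` with respect to a face `F`. -/
def link {n : ℕ} (Δ : Set (Finset (Fin n))) (F : Finset (Fin n)) : Set (Finset (Fin n)) :=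
  {G | Disjoint G F ∧ G ∪ F ∈ Δ}

/-- The dimension of `Δ` (an integer, `-1` if `Δ = {∅}`). -/
noncomputable def dimC {n : ℕ} (Δ : Set (Finset (Fin n))) : ℤ :=
  sSup ((fun F => (F.card : ℤ) - 1) '' Δ)

/-- Serre's condition `(S_r)` over the field `K`:  for every face `F` of `Δ`
(including the empty face), `H̃ᵢ(lk_Δ F; K) = 0` for all `i < min (r-1) (dim lk_Δ F)`. -/
def SerreCondition (K : Type) [Field K] {n : ℕ} (r : ℕ) (Δ : Set (Finset (Fin n))) : Prop :=
  ∀ F ∈ Δ, ∀ i : ℤ, i < min ((r : ℤ) - 1) (dimC (link Δ F)) →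
    ReducedHomologyVanishes K (link Δ F) i

/-- `faceCount Δ c` is the number of faces of `Δ` of cardinality `c`,
i.e. `f_{c-1}(Δ)`. -/
noncomputable def faceCount {n : ℕ} (Δ : Set (Finset (Fin n))) (c : ℕ) : ℕ :=
  Set.ncard {F | F ∈ Δ ∧ F.card = c}

/-- The `h`-vector of a complex `Δ` with `dim Δ = d - 1`, defined by the relation
`∑_{i=0}^{d} f_{i-1}(Δ) (x-1)^{d-i} = ∑_{i=0}^{d} h_i(Δ) x^{d-i}`; i.e. `h_k` is the
coefficient of `x^{d-k}` on the left-hand side (and `h_k = 0` for `k > d`). -/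
noncomputable def hVec {n : ℕ} (Δ : Set (Finset (Fin n))) (d : ℕ) (k : ℕ) : ℤ :=
  if k ≤ d then
    (∑ i ∈ Finset.range (d + 1),
      (faceCount Δ i : ℤ) • ((Polynomial.X - 1) ^ (d - i) : Polynomial ℤ)).coeff (d - k)
  else 0

/-! Writing `h_i(Δ) = ∑_c f_{c-1}(Δ) · [x^{d-i}] (x-1)^{d-c}`, the link terms are handled by double
counting: a face with `c + 1` vertices lies in `c + 1` vertex links, so
`∑_v f_{c-1}(lk v) = (c+1) f_c(Δ)`. The identity then splits face size by face size into the
recurrence `(j+1) a_{j+1} = (j-m) a_j` for the coefficients `a_j = (-1)^{m-j} binom(m, j)` of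
`(x-1)^m`. -/

open Finset Polynomial

section

variable {n : ℕ}

lemma faceCount_eq_card (Δ : Set (Finset (Fin n))) (c : ℕ) :
    faceCount Δ c = #{F : Finset (Fin n) | F ∈ Δ ∧ F.card = c} := by
  rw [faceCount, ← Set.ncard_coe_finset]
  congr 1
  ext F
  simp

lemma mem_link_singleton {Δ : Set (Finset (Fin n))} {v : Fin n} {G : Finset (Fin n)} :
    G ∈ link Δ {v} ↔ v ∉ G ∧ insert v G ∈ Δ := by
  rw [link, Set.mem_ofPred_eq, disjoint_singleton_right, union_singleton]

lemma faceCount_link_singleton (Δ : Set (Finset (Fin n))) (v : Fin n) (c : ℕ) :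
    faceCount (link Δ {v}) c = #{F : Finset (Fin n) | F ∈ Δ ∧ F.card = c + 1 ∧ v ∈ F} := by
  rw [faceCount_eq_card]
  refine card_nbij' (insert v) (erase · v) ?_ ?_ ?_ ?_
  · intro G hG
    simp only [coe_filter, mem_univ, true_and, mem_link_singleton] at hG ⊢
    obtain ⟨⟨hvG, hΔ⟩, hcard⟩ := hG
    exact ⟨hΔ, by rw [card_insert_of_notMem hvG, hcard], mem_insert_self v G⟩
  · intro F hF
    simp only [coe_filter, mem_univ, true_and, mem_link_singleton] at hF ⊢
    obtain ⟨hΔ, hcard, hvF⟩ := hF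
    exact ⟨⟨notMem_erase v F, by rwa [insert_erase hvF]⟩, by rw [card_erase_of_mem hvF, hcard]; rfl⟩
  · intro G hG
    simp only [coe_filter, mem_univ, true_and, mem_link_singleton] at hG
    exact erase_insert hG.1.1
  · intro F hF
    simp only [coe_filter, mem_univ, true_and] at hF
    exact insert_erase hF.2.2

lemma sum_faceCount_link_singleton (Δ : Set (Finset (Fin n))) (c : ℕ) :
    ∑ v : Fin n, faceCount (link Δ {v}) c = (c + 1) * faceCount Δ (c + 1) := by
  set T : Finset (Finset (Fin n)) := {F | F ∈ Δ ∧ F.card = c + 1}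
  calc ∑ v : Fin n, faceCount (link Δ {v}) c
      = ∑ v : Fin n, #(T.bipartiteAbove (· ∈ ·) v) := by
        refine sum_congr rfl fun v _ => ?_
        rw [faceCount_link_singleton, bipartiteAbove, filter_filter]
        simp only [and_assoc]
    _ = ∑ F ∈ T, #F := by
        rw [sum_card_bipartiteAbove_eq_sum_card_bipartiteBelow]
        refine sum_congr rfl fun F _ => ?_
        simp [bipartiteBelow]
    _ = (c + 1) * faceCount Δ (c + 1) := by
        rw [faceCount_eq_card, sum_const_nat fun F hF => (mem_filter.1 hF).2.2, mul_comm]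

lemma coeff_X_sub_one_pow (m j : ℕ) :
    ((X - 1 : ℤ[X]) ^ m).coeff j = (-1) ^ (m - j) * m.choose j := by
  simpa [sub_eq_add_neg] using coeff_X_add_C_pow (-1 : ℤ) m j

lemma succ_mul_coeff_X_sub_one_pow_succ (m j : ℕ) :
    ((j : ℤ) + 1) * ((X - 1 : ℤ[X]) ^ m).coeff (j + 1) =
      ((j : ℤ) - m) * ((X - 1 : ℤ[X]) ^ m).coeff j := by
  rw [coeff_X_sub_one_pow, coeff_X_sub_one_pow]
  rcases le_or_gt m j with hmj | hjm
  · rw [Nat.choose_eq_zero_of_lt (Nat.lt_succ_of_le hmj)]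
    obtain rfl | hlt := hmj.eq_or_lt
    · simp
    · simp [Nat.choose_eq_zero_of_lt hlt]
  · have hchoose : (m.choose (j + 1) : ℤ) * (j + 1) = m.choose j * ((m : ℤ) - j) := by
      have h := Nat.choose_succ_right_eq m j
      zify [hjm.le] at h
      exact h
    have hsign : (-1 : ℤ) ^ (m - j) = -(-1) ^ (m - (j + 1)) := by
      rw [show m - j = m - (j + 1) + 1 by omega, pow_succ, mul_neg_one]
    rw [hsign]
    linear_combination (-1 : ℤ) ^ (m - (j + 1)) * hchoose

lemma hVec_eq_sum (Δ : Set (Finset (Fin n))) {d k : ℕ} (hk : k ≤ d) :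
    hVec Δ d k =
      ∑ c ∈ range (d + 1), faceCount Δ c * ((X - 1 : ℤ[X]) ^ (d - c)).coeff (d - k) := by
  simp [hVec, hk, finsetSum_coeff]

lemma sum_hVec_link_singleton (Δ : Set (Finset (Fin n))) {e k : ℕ} (hk : k ≤ e) :
    ∑ v : Fin n, hVec (link Δ {v}) e k =
      ((k : ℤ) + 1) * hVec Δ (e + 1) (k + 1) + ((e : ℤ) + 1 - k) * hVec Δ (e + 1) k := by
  calc ∑ v : Fin n, hVec (link Δ {v}) e k
      = ∑ c ∈ range (e + 1),
          ((c : ℤ) + 1) * faceCount Δ (c + 1) * ((X - 1 : ℤ[X]) ^ (e - c)).coeff (e - k) := by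
        simp_rw [hVec_eq_sum _ hk]
        rw [sum_comm]
        refine sum_congr rfl fun c _ => ?_
        rw [← sum_mul, ← Nat.cast_sum, sum_faceCount_link_singleton]
        push_cast
        ring
    _ = ∑ c ∈ range (e + 2),
          (c : ℤ) * faceCount Δ c * ((X - 1 : ℤ[X]) ^ (e + 1 - c)).coeff (e - k) := by
        rw [eq_comm, sum_range_succ']
        simp
    _ = _ := by
        rw [hVec_eq_sum _ (by omega), hVec_eq_sum _ (by omega), mul_sum, mul_sum, ← sum_add_distrib]
        refine sum_congr rfl fun c hc => ?_
        have hce : c ≤ e + 1 := Nat.lt_succ_iff.1 (mem_range.1 hc)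
        rw [show e + 1 - (k + 1) = e - k by omega, show e + 1 - k = e - k + 1 by omega]
        have hrec := succ_mul_coeff_X_sub_one_pow_succ (e + 1 - c) (e - k)
        push_cast [Nat.cast_sub hk, Nat.cast_sub hce] at hrec ⊢
        linear_combination -(faceCount Δ c : ℤ) * hrec

end

theorem swartz_h_identity_general {n : ℕ} (Δ : Set (Finset (Fin n))) (d : ℕ) :
    ∀ i : ℕ, 1 ≤ i → i ≤ d →
      (i : ℤ) * hVec Δ d i + ((d : ℤ) - i + 1) * hVec Δ d (i - 1) =
        ∑ v : Fin n, hVec (link Δ {v}) (d - 1) (i - 1) := by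
  intro i hi hid
  obtain ⟨k, rfl⟩ := Nat.exists_eq_add_of_le' hi
  obtain ⟨e, rfl⟩ := Nat.exists_eq_add_of_le' (hi.trans hid)
  rw [Nat.add_sub_cancel, Nat.add_sub_cancel, sum_hVec_link_singleton Δ (by omega)]
  push_cast
  ring

/-- **Lemma (Swartz).**  Let `Δ` be a `(d-1)`-dimensional pure simplicial complex on
`[n]`.  Then for `i = 1, 2, …, d`,
`i·h_i(Δ) + (d-i+1)·h_{i-1}(Δ) = ∑_{v ∈ [n]} h_{i-1}(lk_Δ {v})`. -/
theorem swartz_h_identity {n : ℕ} (Δ : Set (Finset (Fin n))) (hΔ : IsSimplicialComplex Δ)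
    (d : ℕ) (hd : dimC Δ = (d : ℤ) - 1)
    (hpure : ∀ F ∈ Δ, (∀ G ∈ Δ, F ⊆ G → G = F) → F.card = d) :
    ∀ i : ℕ, 1 ≤ i → i ≤ d →
      (i : ℤ) * hVec Δ d i + ((d : ℤ) - i + 1) * hVec Δ d (i - 1) =
        ∑ v : Fin n, hVec (link Δ {v}) (d - 1) (i - 1) :=
  swartz_h_identity_general Δ d

end SerrePaper
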